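/- arXiv:2009.02468 — 5 statements merged into one kernel-verified Lean document; each statement's English description precedes it below -/
import Mathlib

section
/- Let T be a positive integer and δ ∈ [-π, π]. Then |δ| ≤ π/T if and only if for every integer k, Re(e^{iδ} · e^{i(πk/T + π/2)}) · Re(e^{i(πk/T + π/2)}) ≥ 0. -/
/-!
Writing θ = πk/T, the quantity in question is sin (δ + θ) · sin θ, which is π-periodic in θ
because both factors are π-antiperiodic. So it suffices to look at θ = πr/T with 0 ≤ r < T:
if |δ| ≤ π/T, then for r ≥ 1 both δ + θ and θ lie in [0, π], so both sines are nonnegative.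
Conversely, if π/T < δ ≤ π then k = -1 gives sin (δ - π/T) > 0 > sin (-π/T), and the case
δ < -π/T is its mirror image with k = 1.
-/

open Real Complex

lemma re_exp_mul_re_exp_add_pi_div_two (a b : ℝ) :
    (Complex.exp (a * Complex.I) * Complex.exp ((b + π / 2) * Complex.I)).re *
        (Complex.exp ((b + π / 2) * Complex.I)).re =
      Real.sin (a + b) * Real.sin b := by
  rw [← Complex.exp_add, ← add_mul]
  have hsum : (a : ℂ) + (b + π / 2) = ((a + b + π / 2 : ℝ) : ℂ) := by push_cast; ring
  have hb : (b : ℂ) + π / 2 = ((b + π / 2 : ℝ) : ℂ) := by push_cast; ring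
  rw [hsum, hb, Complex.exp_ofReal_mul_I_re, Complex.exp_ofReal_mul_I_re,
    Real.cos_add_pi_div_two, Real.cos_add_pi_div_two]
  ring

lemma periodic_sin_add_mul_sin (δ : ℝ) :
    Function.Periodic (fun θ => Real.sin (δ + θ) * Real.sin θ) π :=
  (Real.sin_antiperiodic.const_add δ).mul Real.sin_antiperiodic

lemma sin_add_mul_sin_pi_mul_div_emod (δ : ℝ) (k : ℤ) {T : ℕ} (hT : (T : ℝ) ≠ 0) :
    Real.sin (δ + π * (k % (T : ℤ) : ℤ) / T) * Real.sin (π * (k % (T : ℤ) : ℤ) / T) =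
      Real.sin (δ + π * k / T) * Real.sin (π * k / T) := by
  have hdiv : (k : ℝ) = T * (k / (T : ℤ) : ℤ) + (k % (T : ℤ) : ℤ) := by
    exact_mod_cast (Int.mul_ediv_add_emod k T).symm
  have hk : π * k / T - (k / (T : ℤ) : ℤ) * π = π * (k % (T : ℤ) : ℤ) / T := by
    field_simp
    linear_combination hdiv
  rw [← hk]
  exact (periodic_sin_add_mul_sin δ).sub_int_mul_eq _

lemma sin_add_mul_sin_nonneg {T : ℕ} {δ : ℝ} (hδ : |δ| ≤ π / T) {r : ℤ}
    (hr0 : 0 ≤ r) (hrT : r < T) :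
    0 ≤ Real.sin (δ + π * r / T) * Real.sin (π * r / T) := by
  obtain rfl | hr1 := hr0.eq_or_lt
  · simp
  have hr1 : (1 : ℝ) ≤ r := by exact_mod_cast hr1
  have hrT : (r : ℝ) + 1 ≤ T := by exact_mod_cast hrT
  have hT : (0 : ℝ) < T := by linarith
  have hδ' := abs_le.mp hδ
  have hθ_ge : π / T ≤ π * r / T :=
    div_le_div_of_nonneg_right (le_mul_of_one_le_right pi_pos.le hr1) hT.le
  have hθ_le : π * r / T + π / T ≤ π := by
    rw [← add_div, div_le_iff₀ hT]
    nlinarith [pi_pos]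
  exact mul_nonneg (Real.sin_nonneg_of_nonneg_of_le_pi (by linarith) (by linarith))
    (Real.sin_nonneg_of_nonneg_of_le_pi (by positivity) (by linarith [div_pos pi_pos hT]))

lemma sin_add_neg_mul_sin_neg_lt_zero {x δ : ℝ} (hx : 0 < x) (hxδ : x < δ) (hδ : δ ≤ π) :
    Real.sin (δ + -x) * Real.sin (-x) < 0 := by
  have hpos : 0 < Real.sin (δ + -x) := Real.sin_pos_of_pos_of_lt_pi (by linarith) (by linarith)
  have hneg : Real.sin (-x) < 0 := by
    rw [Real.sin_neg, neg_neg_iff_pos]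
    exact Real.sin_pos_of_pos_of_lt_pi hx (by linarith)
  exact mul_neg_of_pos_of_neg hpos hneg

theorem stmt_0 (T : ℕ) (hT : 0 < T) (δ : ℝ) (hδ : δ ∈ Set.Icc (-π) π) :
    |δ| ≤ π / T ↔
      ∀ k : ℤ,
        (Complex.exp (δ * Complex.I) *
            Complex.exp ((π * k / T + π / 2) * Complex.I)).re *
          (Complex.exp ((π * k / T + π / 2) * Complex.I)).re ≥ 0 := by
  have hTpos : (0 : ℝ) < T := by exact_mod_cast hT
  have hcast : ∀ k : ℤ, (π * k / T : ℂ) = ((π * k / T : ℝ) : ℂ) := fun k => by push_cast; rfl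
  simp only [hcast, re_exp_mul_re_exp_add_pi_div_two, ge_iff_le]
  constructor
  · intro h k
    rw [← sin_add_mul_sin_pi_mul_div_emod δ k hTpos.ne']
    exact sin_add_mul_sin_nonneg h (Int.emod_nonneg k (by omega))
      (by exact_mod_cast Int.emod_lt_of_pos k (by omega))
  · intro h
    by_contra hlt
    have hx : 0 < π / T := div_pos pi_pos hTpos
    rcases lt_abs.mp (not_le.mp hlt) with hδpos | hδneg
    · have hk := h (-1)
      rw [show π * ((-1 : ℤ) : ℝ) / T = -(π / T) by push_cast; ring] at hk
      exact hk.not_gt (sin_add_neg_mul_sin_neg_lt_zero hx hδpos hδ.2)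
    · have hk := h 1
      rw [show π * ((1 : ℤ) : ℝ) / T = π / T by push_cast; ring] at hk
      have hneg := sin_add_neg_mul_sin_neg_lt_zero hx hδneg (neg_le.mp hδ.1)
      rw [← neg_add, Real.sin_neg, Real.sin_neg, neg_mul_neg] at hneg
      exact hk.not_gt hneg
end

section
/- Let T ≥ 2 and δ ∈ [-π, π]. Then |δ| ≤ π/T if and only if Re(e^{iδ} · e^{i(πk/T + π/2)}) ≤ 0 for all k ∈ {1, …, T−1}. -/
/-!
Since `e^{iδ} e^{i(θ + π/2)} = e^{i(δ + θ + π/2)}`, its real part is `-sin (δ + θ)`, so the condition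
says that `sin (δ + πk/T) ≥ 0` for `k = 1, …, T - 1`. If `|δ| ≤ π/T`, all the angles `δ + πk/T` lie
in `[0, π]`. Conversely, the extreme cases `k = 1` and `k = T - 1` already force `δ ≥ -π/T` and
`δ ≤ π/T`: otherwise `δ + π/T ∈ (-π, 0)` or `δ - π/T ∈ (0, π)`, and
`sin (δ + π - π/T) = -sin (δ - π/T)`.
-/

open Real Complex

lemma re_exp_mul_I_mul_exp_add_pi_div_two_mul_I (δ θ : ℝ) :
    (Complex.exp (δ * I) * Complex.exp ((θ + π / 2) * I)).re = -Real.sin (δ + θ) := by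
  have hcast : (δ + (θ + π / 2) : ℂ) = ((δ + θ + π / 2 : ℝ) : ℂ) := by push_cast; ring
  rw [← Complex.exp_add, ← add_mul, hcast, exp_ofReal_mul_I_re, Real.cos_add_pi_div_two]

lemma Real.sin_add_nonneg_of_abs_le {δ θ ε : ℝ} (hδ : |δ| ≤ ε) (hθ : ε ≤ θ) (hθ' : θ ≤ π - ε) :
    0 ≤ Real.sin (δ + θ) := by
  obtain ⟨hδ₁, hδ₂⟩ := abs_le.mp hδ
  exact sin_nonneg_of_nonneg_of_le_pi (by linarith) (by linarith)

lemma Real.abs_le_of_sin_add_nonneg {δ ε : ℝ} (hδ : δ ∈ Set.Icc (-π) π) (hε : 0 < ε)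
    (h₁ : 0 ≤ Real.sin (δ + ε)) (h₂ : 0 ≤ Real.sin (δ + (π - ε))) : |δ| ≤ ε := by
  obtain ⟨hδ₁, hδ₂⟩ := hδ
  refine abs_le.mpr ⟨?_, ?_⟩
  · by_contra! hlt
    linarith [sin_neg_of_neg_of_neg_pi_lt (x := δ + ε) (by linarith) (by linarith)]
  · by_contra! hlt
    have hsin : Real.sin (δ + (π - ε)) = -Real.sin (δ - ε) := by
      rw [show δ + (π - ε) = δ - ε + π by ring, Real.sin_add_pi]
    linarith [sin_pos_of_pos_of_lt_pi (x := δ - ε) (by linarith) (by linarith)]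

theorem stmt_3 (T : ℕ) (hT : 2 ≤ T) (δ : ℝ) (hδ : δ ∈ Set.Icc (-π) π) :
    |δ| ≤ π / T ↔
      ∀ k : ℕ, 1 ≤ k → k ≤ T - 1 →
        (Complex.exp (δ * Complex.I) *
            Complex.exp ((π * k / T + π / 2) * Complex.I)).re ≤ 0 := by
  have hT₀ : (0 : ℝ) < T := by positivity
  have hre (k : ℕ) : (Complex.exp (δ * I) * Complex.exp ((π * k / T + π / 2) * I)).re =
      -Real.sin (δ + π * k / T) := by
    exact_mod_cast re_exp_mul_I_mul_exp_add_pi_div_two_mul_I δ (π * k / T)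
  have hlast : π * ((T - 1 : ℕ) : ℝ) / T = π - π / T := by
    rw [Nat.cast_sub (by omega), Nat.cast_one]
    field_simp
  simp only [hre, neg_nonpos]
  constructor
  · intro h k hk₁ hk₂
    refine Real.sin_add_nonneg_of_abs_le h ?_ ?_
    · have : (1 : ℝ) ≤ k := by exact_mod_cast hk₁
      calc π / T = π * 1 / T := by ring
        _ ≤ π * k / T := by gcongr
    · have : (k : ℝ) ≤ ((T - 1 : ℕ) : ℝ) := by exact_mod_cast hk₂
      calc π * k / T ≤ π * ((T - 1 : ℕ) : ℝ) / T := by gcongr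
        _ = π - π / T := hlast
  · intro h
    refine Real.abs_le_of_sin_add_nonneg hδ (by positivity) ?_ ?_
    · simpa using h 1 le_rfl (by omega)
    · simpa [hlast] using h (T - 1) (by omega) le_rfl
end

section
/- Let ω ∈ ℝ, r > 0, δ ∈ ℝ, and define u_i = Re(e^{iωi}) and y_i = Re(−r e^{iδ} e^{iωi}) for integers i. Then for all integers i, l: (y_i − y_l)(u_i − u_l) = −4r sin²(ω(i−l)/2) · Re(e^{iδ} e^{i(ω(i+l)/2 + π/2)}) · Re(e^{i(ω(i+l)/2 + π/2)}). -/
/-! Writing `ωi = s + d` and `ωl = s - d` with `s, d` the half-sum and half-difference, both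
factors are differences `cos (c + d) - cos (c - d) = 2 sin d cos (c + π/2)`. -/

open Real Complex

lemma re_exp_ofReal_mul_I_mul_exp_ofReal_mul_I (x y : ℝ) :
    (exp (x * I) * exp (y * I)).re = Real.cos (x + y) := by
  rw [← Complex.exp_add, ← add_mul, ← ofReal_add, exp_ofReal_mul_I_re]

lemma re_ofReal_mul_exp_ofReal_mul_I_mul_exp_ofReal_mul_I (c x y : ℝ) :
    ((c : ℂ) * exp (x * I) * exp (y * I)).re = c * Real.cos (x + y) := by
  rw [mul_assoc, re_ofReal_mul, re_exp_ofReal_mul_I_mul_exp_ofReal_mul_I]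

lemma cos_add_sub_cos_sub (s d : ℝ) :
    Real.cos (s + d) - Real.cos (s - d) = 2 * Real.sin d * Real.cos (s + π / 2) := by
  rw [Real.cos_add_pi_div_two, Real.cos_add, Real.cos_sub]
  ring

theorem stmt_10_general (ω r δ : ℝ)
    (u y : ℤ → ℝ)
    (hu : ∀ i : ℤ, u i = (Complex.exp ((ω * i : ℝ) * Complex.I)).re)
    (hy : ∀ i : ℤ, y i = (-(r : ℂ) * Complex.exp ((δ : ℝ) * Complex.I) *
        Complex.exp ((ω * i : ℝ) * Complex.I)).re) :
    ∀ i l : ℤ,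
      (y i - y l) * (u i - u l)
        = -4 * r * (Real.sin (ω * (i - l) / 2)) ^ 2 *
            (Complex.exp ((δ : ℝ) * Complex.I) *
              Complex.exp ((ω * (i + l) / 2 + π / 2 : ℝ) * Complex.I)).re *
            (Complex.exp ((ω * (i + l) / 2 + π / 2 : ℝ) * Complex.I)).re := by
  intro i l
  set s := ω * (i + l) / 2
  set d := ω * (i - l) / 2
  have hi : ω * (i : ℝ) = s + d := by ring
  have hl : ω * (l : ℝ) = s - d := by ring
  simp only [hu, hy, ← ofReal_neg, re_ofReal_mul_exp_ofReal_mul_I_mul_exp_ofReal_mul_I,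
    re_exp_ofReal_mul_I_mul_exp_ofReal_mul_I, exp_ofReal_mul_I_re, hi, hl]
  calc (-r * Real.cos (δ + (s + d)) - -r * Real.cos (δ + (s - d))) *
        (Real.cos (s + d) - Real.cos (s - d))
      = -r * (Real.cos (δ + s + d) - Real.cos (δ + s - d)) *
          (Real.cos (s + d) - Real.cos (s - d)) := by
        rw [add_assoc, add_sub_assoc]; ring
    _ = -4 * r * Real.sin d ^ 2 * Real.cos (δ + (s + π / 2)) * Real.cos (s + π / 2) := by
        rw [cos_add_sub_cos_sub, cos_add_sub_cos_sub, ← add_assoc]; ring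

theorem stmt_10 (ω r δ : ℝ) (hr : 0 < r)
    (u y : ℤ → ℝ)
    (hu : ∀ i : ℤ, u i = (Complex.exp ((ω * i : ℝ) * Complex.I)).re)
    (hy : ∀ i : ℤ, y i = (-(r : ℂ) * Complex.exp ((δ : ℝ) * Complex.I) *
        Complex.exp ((ω * i : ℝ) * Complex.I)).re) :
    ∀ i l : ℤ,
      (y i - y l) * (u i - u l)
        = -4 * r * (Real.sin (ω * (i - l) / 2)) ^ 2 *
            (Complex.exp ((δ : ℝ) * Complex.I) *
              Complex.exp ((ω * (i + l) / 2 + π / 2 : ℝ) * Complex.I)).re *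
            (Complex.exp ((ω * (i + l) / 2 + π / 2 : ℝ) * Complex.I)).re :=
  stmt_10_general ω r δ u y hu hy
end

section
/- Let α, β be coprime positive integers with α < β, α odd, set ω = απ/β and T = 2β. Let G ∈ ℂ satisfy G = −r e^{iδ} with r > 0 and |δ| ≤ π/T. Define u_i = Re(e^{iωi}) and y_i = Re(G e^{iωi}) for i = 0, …, T−1. Then (y_i − y_l)(u_i − u_l) ≤ 0 for all i, l ∈ {0, …, T−1}. -/
open Real Complex

/-!
Writing `u_i = cos (ω i)` and `y_i = -r cos (ω i + δ)`, sum-to-product gives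
`(y_i - y_l)(u_i - u_l) = -4 r sin θ sin (θ + δ) sin² ((ω i - ω l) / 2)` with `θ = (ω i + ω l) / 2`.
Since `θ` is a multiple of `π / T` and `θ ↦ sin θ sin (θ + δ)` is `π`-periodic, we may take
`θ = s π / T` with `0 ≤ s < T`; then either `sin θ = 0` or both `θ` and `θ + δ` lie in `[0, π]`.
-/

lemma periodic_sin_mul_sin_add (δ : ℝ) :
    Function.Periodic (fun θ => Real.sin θ * Real.sin (θ + δ)) π := by
  intro θ
  simp only [add_right_comm θ π δ, Real.sin_add_pi]
  ring

lemma sin_mul_sin_add_nonneg {θ δ ε : ℝ} (hεθ : ε ≤ θ) (hθε : θ ≤ π - ε) (hδ : |δ| ≤ ε) :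
    0 ≤ Real.sin θ * Real.sin (θ + δ) := by
  obtain ⟨hδl, hδu⟩ := abs_le.mp hδ
  have hε : 0 ≤ ε := (abs_nonneg δ).trans hδ
  exact mul_nonneg (sin_nonneg_of_nonneg_of_le_pi (by linarith) (by linarith))
    (sin_nonneg_of_nonneg_of_le_pi (by linarith) (by linarith))

lemma sin_nat_mul_pi_div_mul_sin_add_nonneg {T : ℕ} (hT : 0 < T) {δ : ℝ} (hδ : |δ| ≤ π / T)
    (k : ℕ) : 0 ≤ Real.sin (k * π / T) * Real.sin (k * π / T + δ) := by
  have hTR : (0 : ℝ) < T := by exact_mod_cast hT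
  have hk : (k : ℝ) * π / T = (k % T : ℕ) * π / T + (k / T : ℕ) * π := by
    conv_lhs => rw [← Nat.mod_add_div k T]
    push_cast
    field_simp
  have hper := (periodic_sin_mul_sin_add δ).nat_mul (k / T) ((k % T : ℕ) * π / T)
  rw [hk, hper]
  obtain hs | hs := Nat.eq_zero_or_pos (k % T)
  · simp [hs]
  · have hs1 : (1 : ℝ) ≤ (k % T : ℕ) := by exact_mod_cast hs
    have hsT : ((k % T : ℕ) : ℝ) + 1 ≤ T := by exact_mod_cast Nat.mod_lt k hT
    refine sin_mul_sin_add_nonneg ?_ ?_ hδ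
    · gcongr
      exact le_mul_of_one_le_left pi_pos.le hs1
    · rw [le_sub_iff_add_le, ← add_div, div_le_iff₀ hTR]
      nlinarith [pi_pos]

lemma cos_add_sub_cos_add_mul_cos_sub_cos (a b δ : ℝ) :
    (Real.cos (a + δ) - Real.cos (b + δ)) * (Real.cos a - Real.cos b) =
      4 * (Real.sin ((a + b) / 2) * Real.sin ((a + b) / 2 + δ)) * Real.sin ((a - b) / 2) ^ 2 := by
  rw [Real.cos_sub_cos, Real.cos_sub_cos, show (a + δ + (b + δ)) / 2 = (a + b) / 2 + δ by ring,
    show (a + δ - (b + δ)) / 2 = (a - b) / 2 by ring]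
  ring

lemma neg_mul_exp_mul_exp_re (r δ x : ℝ) :
    (-(r : ℂ) * exp (δ * I) * exp (x * I)).re = -(r * Real.cos (x + δ)) := by
  rw [mul_assoc, ← Complex.exp_add, ← add_mul, ← ofReal_add, neg_mul, neg_re, re_ofReal_mul,
    exp_ofReal_mul_I_re, add_comm]

theorem stmt_11_general (α β : ℕ)
    (r δ : ℝ) (hr : 0 < r)
    (ω : ℝ) (hω : ω = α * π / β) (T : ℕ) (hT : T = 2 * β)
    (hδ : |δ| ≤ π / T)
    (G : ℂ) (hG : G = -(r : ℂ) * Complex.exp ((δ : ℝ) * Complex.I))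
    (u y : ℕ → ℝ)
    (hu : ∀ i, u i = (Complex.exp ((ω * i : ℝ) * Complex.I)).re)
    (hy : ∀ i, y i = (G * Complex.exp ((ω * i : ℝ) * Complex.I)).re) :
    ∀ i l, i < T → l < T → (y i - y l) * (u i - u l) ≤ 0 := by
  intro i l hi _
  have hTpos : 0 < T := by omega
  have hβ : (β : ℝ) ≠ 0 := by exact_mod_cast (show β ≠ 0 by omega)
  have hθ : (ω * i + ω * l) / 2 = ((α * (i + l) : ℕ) : ℝ) * π / T := by
    rw [hω, hT]
    push_cast
    field_simp
  have hprod := cos_add_sub_cos_add_mul_cos_sub_cos (ω * i) (ω * l) δ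
  rw [hθ] at hprod
  have hsin := sin_nat_mul_pi_div_mul_sin_add_nonneg hTpos hδ (α * (i + l))
  rw [hy, hy, hu, hu, hG, neg_mul_exp_mul_exp_re, neg_mul_exp_mul_exp_re, exp_ofReal_mul_I_re,
    exp_ofReal_mul_I_re]
  nlinarith [mul_nonneg (mul_nonneg hr.le hsin) (sq_nonneg (Real.sin ((ω * i - ω * l) / 2)))]

theorem stmt_11 (α β : ℕ) (hcop : Nat.Coprime α β) (hα : 0 < α) (hαβ : α < β)
    (hodd : Odd α) (r δ : ℝ) (hr : 0 < r)
    (ω : ℝ) (hω : ω = α * π / β) (T : ℕ) (hT : T = 2 * β)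
    (hδ : |δ| ≤ π / T)
    (G : ℂ) (hG : G = -(r : ℂ) * Complex.exp ((δ : ℝ) * Complex.I))
    (u y : ℕ → ℝ)
    (hu : ∀ i, u i = (Complex.exp ((ω * i : ℝ) * Complex.I)).re)
    (hy : ∀ i, y i = (G * Complex.exp ((ω * i : ℝ) * Complex.I)).re) :
    ∀ i l, i < T → l < T → (y i - y l) * (u i - u l) ≤ 0 :=
  stmt_11_general α β r δ hr ω hω T hT hδ G hG u y hu hy
end

section
/- Let α, β be coprime positive integers with α < β, α even, set ω = απ/β and T = β. Let G = −r e^{iδ} with r > 0 and |δ| ≤ π/T. Define u_i = Re(e^{iωi}) and y_i = Re(G e^{iωi}) for i = 0, …, T−1. Then (y_i − y_l)(u_i − u_l) ≤ 0 for all i, l ∈ {0, …, T−1}. -/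
/-!
Write `A = ωi`, `B = ωl`. Sum-to-product gives
`(y_i - y_l)(u_i - u_l) = -4r · sin((A+B)/2) sin((A+B)/2 + δ) · sin²((A-B)/2)`.
Since `α` is even, the midpoint `(A+B)/2` is an integer multiple of `π/T`, and every zero of
`sin` is also such a multiple; as `|δ| ≤ π/T`, moving from the midpoint by `δ` never enters the
interior of an interval on which `sin` changes sign, so the two sines have the same sign.
-/

open Real Complex

namespace Real

lemma sin_mul_sin_add_nonneg_of_abs_le {x δ : ℝ} (hx₀ : |δ| ≤ x) (hxπ : x ≤ π - |δ|) :
    0 ≤ sin x * sin (x + δ) := by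
  have hδ₁ := neg_abs_le δ
  have hδ₂ := le_abs_self δ
  exact mul_nonneg (sin_nonneg_of_nonneg_of_le_pi (by linarith) (by linarith))
    (sin_nonneg_of_nonneg_of_le_pi (by linarith) (by linarith))

lemma sin_nat_mul_pi_div_mul_sin_add_nonneg (m T : ℕ) {δ : ℝ} (hδ : |δ| ≤ π / T) :
    0 ≤ sin (m * π / T) * sin (m * π / T + δ) := by
  rcases Nat.eq_zero_or_pos T with rfl | hT
  · simp
  have hTR : (0 : ℝ) < T := by exact_mod_cast hT
  set j := m % T
  set q := m / T
  have hsplit : (m : ℝ) * π / T = j * π / T + q * π := by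
    have hm : (m : ℝ) = j + T * q := by exact_mod_cast (Nat.mod_add_div m T).symm
    rw [hm]; field_simp
  have hperiod :
      sin (m * π / T) * sin (m * π / T + δ) = sin (j * π / T) * sin (j * π / T + δ) := by
    rw [hsplit, add_right_comm, sin_add_nat_mul_pi, sin_add_nat_mul_pi, mul_mul_mul_comm,
      ← pow_add, ← two_mul, pow_mul, neg_one_sq, one_pow, one_mul]
  rw [hperiod]
  rcases Nat.eq_zero_or_pos j with hj | hj
  · simp [hj]
  have hj1 : (1 : ℝ) ≤ j := by exact_mod_cast hj
  have hjT : (j : ℝ) + 1 ≤ T := by exact_mod_cast Nat.mod_lt m hT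
  have hstep : π / T ≤ j * π / T := by
    rw [mul_div_assoc]; exact le_mul_of_one_le_left (by positivity) hj1
  have hlast : j * π / T + π / T ≤ π := by
    rw [← add_div, ← add_one_mul, div_le_iff₀ hTR, mul_comm π]; gcongr
  apply sin_mul_sin_add_nonneg_of_abs_le <;> linarith

lemma cos_add_sub_cos_add_mul_cos_sub_cos (A B δ : ℝ) :
    (cos (A + δ) - cos (B + δ)) * (cos A - cos B) =
      4 * (sin ((A + B) / 2) * sin ((A + B) / 2 + δ)) * sin ((A - B) / 2) ^ 2 := by
  rw [cos_sub_cos, cos_sub_cos]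
  ring_nf

end Real

lemma Complex.re_neg_ofReal_mul_exp_mul_exp (r δ θ : ℝ) :
    (-(r : ℂ) * exp (δ * I) * exp (θ * I)).re = -(r * Real.cos (θ + δ)) := by
  rw [mul_assoc, ← Complex.exp_add, ← add_mul, ← ofReal_add, add_comm, neg_mul, neg_re,
    re_ofReal_mul, exp_ofReal_mul_I_re]

theorem stmt_12_general (α β : ℕ)
    (heven : Even α) (r δ : ℝ) (hr : 0 < r)
    (ω : ℝ) (hω : ω = α * π / β) (T : ℕ) (hT : T = β)
    (hδ : |δ| ≤ π / T)
    (G : ℂ) (hG : G = -(r : ℂ) * Complex.exp ((δ : ℝ) * Complex.I))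
    (u y : ℕ → ℝ)
    (hu : ∀ i, u i = (Complex.exp ((ω * i : ℝ) * Complex.I)).re)
    (hy : ∀ i, y i = (G * Complex.exp ((ω * i : ℝ) * Complex.I)).re) :
    ∀ i l, i < T → l < T → (y i - y l) * (u i - u l) ≤ 0 := by
  intro i l _ _
  obtain ⟨a, rfl⟩ := heven
  have hmid : (ω * i + ω * l) / 2 = ((a * (i + l) : ℕ) : ℝ) * π / T := by
    rw [hω, hT]; push_cast; ring
  have hsign := Real.sin_nat_mul_pi_div_mul_sin_add_nonneg (a * (i + l)) T hδ
  rw [← hmid] at hsign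
  have hprod : (y i - y l) * (u i - u l) = -(r * ((Real.cos (ω * i + δ) - Real.cos (ω * l + δ)) *
      (Real.cos (ω * i) - Real.cos (ω * l)))) := by
    simp only [hy, hu, hG, Complex.re_neg_ofReal_mul_exp_mul_exp, exp_ofReal_mul_I_re]
    ring
  rw [hprod, Real.cos_add_sub_cos_add_mul_cos_sub_cos, neg_nonpos]
  positivity

theorem stmt_12 (α β : ℕ) (hcop : Nat.Coprime α β) (hα : 0 < α) (hαβ : α < β)
    (heven : Even α) (r δ : ℝ) (hr : 0 < r)
    (ω : ℝ) (hω : ω = α * π / β) (T : ℕ) (hT : T = β)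
    (hδ : |δ| ≤ π / T)
    (G : ℂ) (hG : G = -(r : ℂ) * Complex.exp ((δ : ℝ) * Complex.I))
    (u y : ℕ → ℝ)
    (hu : ∀ i, u i = (Complex.exp ((ω * i : ℝ) * Complex.I)).re)
    (hy : ∀ i, y i = (G * Complex.exp ((ω * i : ℝ) * Complex.I)).re) :
    ∀ i l, i < T → l < T → (y i - y l) * (u i - u l) ≤ 0 :=
  stmt_12_general α β heven r δ hr ω hω T hT hδ G hG u y hu hy
end
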